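/- Let f : ℝ → ℝ be positive and twice differentiable at r_c > 0 with r_c f'(r_c) = 2 f(r_c). Define 𝓕(r) = v_s²·(1 + 2(D-2)·f(r)/(r f'(r))) - 1 with constant v_s² = γ - 1, γ = D/(D-1), D ≥ 3. Then 𝓕'(r_c) = -2(γ-1)(D-2)·r_c·f(r_c)·f'(r_c)⁻²·(f r⁻²)''(r_c); in particular 𝓕'(r_c) and (f r⁻²)''(r_c) have opposite signs. -/

import Mathlib

/-! With `g = f / r²` one has `r f' = 2 f + r³ g'`, so `f / (r f') = g / (2 g + r g')`. At a
critical point `g' = 0`, and the derivative of this quotient there is `-r g'' / (4 g)`, which is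
`-r f f'⁻² g''` because `f' = 2 r g`. The prefactor `2 (γ - 1) (D - 2)` of `𝓕` is positive, since
`γ - 1 = 1 / (D - 1)`. -/

open Filter Topology

section

variable {f : ℝ → ℝ} {x : ℝ}

theorem ContDiffAt.differentiableAt_deriv {n : WithTop ℕ∞} (hf : ContDiffAt ℝ n f x)
    (hn : 2 ≤ n) : DifferentiableAt ℝ (deriv f) x :=
  (hf.derivWithin (m := 1) (by simpa [one_add_one_eq_two] using hn)).differentiableAt one_ne_zero

theorem ContDiffAt.eventually_differentiableAt {n : ℕ} (hf : ContDiffAt ℝ n f x) (hn : 1 ≤ n) :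
    ∀ᶠ r in 𝓝 x, DifferentiableAt ℝ f r := by
  filter_upwards [hf.eventually (by simp)] with r hr
  exact hr.differentiableAt (by exact_mod_cast Nat.one_le_iff_ne_zero.mp hn)

theorem deriv_div_sq_eventuallyEq (hf : ∀ᶠ r in 𝓝 x, DifferentiableAt ℝ f r) (hx : x ≠ 0) :
    (deriv fun r => f r / r ^ 2) =ᶠ[𝓝 x] fun r => deriv f r / r ^ 2 - 2 * f r / r ^ 3 := by
  filter_upwards [hf, eventually_ne_nhds hx] with r hfr hr
  have h : HasDerivAt (fun r => f r / r ^ 2)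
      ((deriv f r * r ^ 2 - f r * (2 * r)) / (r ^ 2) ^ 2) r :=
    (hfr.hasDerivAt.div (hasDerivAt_pow 2 r) (pow_ne_zero 2 hr)).congr_deriv (by norm_num)
  rw [h.deriv]
  field_simp

theorem deriv_deriv_div_sq (hf : ∀ᶠ r in 𝓝 x, DifferentiableAt ℝ f r)
    (hf' : DifferentiableAt ℝ (deriv f) x) (hx : x ≠ 0) :
    deriv (deriv fun r => f r / r ^ 2) x =
      deriv (deriv f) x / x ^ 2 - 4 * deriv f x / x ^ 3 + 6 * f x / x ^ 4 := by
  have hfx : HasDerivAt f (deriv f x) x := hf.self_of_nhds.hasDerivAt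
  have h : HasDerivAt (fun r => deriv f r / r ^ 2 - 2 * f r / r ^ 3)
      ((deriv (deriv f) x * x ^ 2 - deriv f x * (2 * x)) / (x ^ 2) ^ 2 -
        (2 * deriv f x * x ^ 3 - 2 * f x * (3 * x ^ 2)) / (x ^ 3) ^ 2) x :=
    ((hf'.hasDerivAt.div (hasDerivAt_pow 2 x) (pow_ne_zero 2 hx)).sub
      ((hfx.const_mul 2).div (hasDerivAt_pow 3 x) (pow_ne_zero 3 hx))).congr_deriv (by norm_num)
  rw [(deriv_div_sq_eventuallyEq hf hx).deriv_eq, h.deriv]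
  field_simp
  ring

theorem hasDerivAt_div_mul_deriv (hf : DifferentiableAt ℝ f x)
    (hf' : DifferentiableAt ℝ (deriv f) x) (hx : x * deriv f x ≠ 0) :
    HasDerivAt (fun r => f r / (r * deriv f r))
      ((deriv f x * (x * deriv f x) - f x * (deriv f x + x * deriv (deriv f) x)) /
        (x * deriv f x) ^ 2) x :=
  (hf.hasDerivAt.div ((hasDerivAt_id x).mul hf'.hasDerivAt) hx).congr_deriv (by simp)

theorem hasDerivAt_div_mul_deriv_of_mul_deriv_eq (hf : ContDiffAt ℝ 2 f x) (hx : x ≠ 0)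
    (hfx : f x ≠ 0) (hcrit : x * deriv f x = 2 * f x) :
    HasDerivAt (fun r => f r / (r * deriv f r))
      (-(x * f x * (deriv f x)⁻¹ ^ 2 * deriv (deriv fun r => f r / r ^ 2) x)) x := by
  have hden : x * deriv f x ≠ 0 := by rw [hcrit]; exact mul_ne_zero two_ne_zero hfx
  have hf1 : deriv f x = 2 * f x / x := by field_simp; linarith
  have hf' := hf.differentiableAt_deriv le_rfl
  convert hasDerivAt_div_mul_deriv (hf.differentiableAt (by norm_num)) hf' hden using 1
  rw [deriv_deriv_div_sq (hf.eventually_differentiableAt one_le_two) hf' hx, hf1]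
  field_simp
  ring

end

theorem mul_pos_iff_and_mul_neg_iff_of_neg {a b : ℝ} (ha : a < 0) :
    (0 < a * b ↔ b < 0) ∧ (a * b < 0 ↔ 0 < b) := by
  simpa only [smul_eq_mul] using ⟨smul_pos_iff_of_neg_left ha, smul_neg_iff_of_neg_left ha⟩

/-- At a critical point r_c (where r_c f'(r_c) = 2 f(r_c)), the classifying function
𝓕(r) = v_s²(1 + 2(D-2) f/(r f')) - 1 satisfies
𝓕'(r_c) = -2(γ-1)(D-2) r_c f(r_c) f'(r_c)⁻² (f r⁻²)''(r_c);
in particular 𝓕'(r_c) and (f r⁻²)''(r_c) have opposite signs. -/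
theorem classifying_function_deriv (D : ℕ) (hD : 3 ≤ D) (γ : ℝ)
    (hγ : γ = (D : ℝ) / ((D : ℝ) - 1))
    (f : ℝ → ℝ) (r_c : ℝ) (hr : 0 < r_c)
    (hfd : ContDiffAt ℝ 2 f r_c) (hfpos : 0 < f r_c)
    (hcrit : r_c * deriv f r_c = 2 * f r_c)
    (𝓕 : ℝ → ℝ)
    (h𝓕 : ∀ r, 𝓕 r = (γ - 1) * (1 + 2 * ((D : ℝ) - 2) * f r / (r * deriv f r)) - 1) :
    deriv 𝓕 r_c = -2 * (γ - 1) * ((D : ℝ) - 2) * r_c * f r_c * (deriv f r_c)⁻¹ ^ 2 *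
        deriv (deriv (fun r => f r / r ^ 2)) r_c ∧
      (0 < deriv 𝓕 r_c ↔ deriv (deriv (fun r => f r / r ^ 2)) r_c < 0) ∧
      (deriv 𝓕 r_c < 0 ↔ 0 < deriv (deriv (fun r => f r / r ^ 2)) r_c) := by
  have hD' : (3 : ℝ) ≤ D := by exact_mod_cast hD
  have hγ1 : 0 < γ - 1 := by
    rw [hγ, div_sub_one (by linarith)]
    exact div_pos (by linarith) (by linarith)
  have hq := hasDerivAt_div_mul_deriv_of_mul_deriv_eq hfd hr.ne' hfpos.ne' hcrit
  have h𝓕' : HasDerivAt 𝓕 ((γ - 1) * (2 * ((D : ℝ) - 2) *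
      -(r_c * f r_c * (deriv f r_c)⁻¹ ^ 2 * deriv (deriv fun r => f r / r ^ 2) r_c))) r_c := by
    simp only [funext h𝓕, mul_div_assoc]
    exact (((hq.const_mul _).const_add 1).const_mul _).sub_const 1
  have hcoeff : -2 * (γ - 1) * ((D : ℝ) - 2) * r_c * f r_c * (deriv f r_c)⁻¹ ^ 2 < 0 := by
    have hf' : deriv f r_c ≠ 0 := fun h => by rw [h] at hcrit; linarith
    have : 0 < (γ - 1) * ((D : ℝ) - 2) * r_c * f r_c * (deriv f r_c)⁻¹ ^ 2 := by
      have : (0 : ℝ) < D - 2 := by linarith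
      positivity
    linarith
  have hderiv : deriv 𝓕 r_c = -2 * (γ - 1) * ((D : ℝ) - 2) * r_c * f r_c *
      (deriv f r_c)⁻¹ ^ 2 * deriv (deriv (fun r => f r / r ^ 2)) r_c := by
    rw [h𝓕'.deriv]; ring
  rw [hderiv]
  exact ⟨rfl, mul_pos_iff_and_mul_neg_iff_of_neg hcoeff⟩
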